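/- In the weighted hidden clique model, the second moment of the likelihood ratio under the null equals E₀[L(X)²] = (1/C(n,k)) Σ_{i=0}^{k} C(k,i) C(n-k, k-i) ρ^{C(i,2)}, where ρ = E₀[(q(X)/p(X))²] = χ²(Q‖P) + 1. -/

import Mathlib

open MeasureTheory
open scoped ENNReal

/-- The edges of the complete graph on `n` vertices. -/
def CliqueEdge (n : ℕ) : Type := {p : Fin n × Fin n // p.1 < p.2}

instance (n : ℕ) : Fintype (CliqueEdge n) := by unfold CliqueEdge; infer_instance

/-- The likelihood ratio of the weighted hidden clique model:
`L(x) = (1/C(n,k)) Σ_{|S|=k} Π_{e ∈ E(S)} q(x_e)/p(x_e)`. -/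
noncomputable def likelihoodRatio (n k : ℕ) (p q : ℝ → ℝ) (x : CliqueEdge n → ℝ) : ℝ :=
  (n.choose k : ℝ)⁻¹ *
    ∑ S ∈ Finset.univ.filter (fun S : Finset (Fin n) => S.card = k),
      ∏ e : CliqueEdge n,
        if e.val.1 ∈ S ∧ e.val.2 ∈ S then q (x e) / p (x e) else 1

/-- Fubini for a product of one-variable functions, with an explicit measure. -/
lemma fubini_aux {ι : Type*} [Fintype ι] (μ : Measure ℝ) [SigmaFinite μ] (f : ι → ℝ → ℝ) :
    ∫ x : ι → ℝ, ∏ i, f i (x i) ∂(Measure.pi fun _ => μ) = ∏ i, ∫ t, f i t ∂μ := by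
  letI : MeasureSpace ℝ := { volume := μ }
  haveI : SigmaFinite (volume : Measure ℝ) := inferInstanceAs (SigmaFinite μ)
  exact MeasureTheory.integral_fintype_prod_eq_prod (μ := fun _ => μ) f

/-- Integrability of a product of integrable one-variable functions. -/
lemma integrable_prod_aux {ι : Type*} [Fintype ι] (μ : Measure ℝ) [SigmaFinite μ]
    (f : ι → ℝ → ℝ) (hf : ∀ i, Integrable (f i) μ) :
    Integrable (fun x : ι → ℝ => ∏ i, f i (x i)) (Measure.pi fun _ => μ) := by
  letI : MeasureSpace ℝ := { volume := μ }
  haveI : SigmaFinite (volume : Measure ℝ) := inferInstanceAs (SigmaFinite μ)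
  exact Integrable.fintype_prod hf

/-- The number of edges with both endpoints in `A` is `C(|A|, 2)`. -/
lemma card_edge_filter (n : ℕ) (A : Finset (Fin n)) :
    (Finset.univ.filter (fun e : CliqueEdge n => e.val.1 ∈ A ∧ e.val.2 ∈ A)).card
      = A.card.choose 2 := by
  rw [← Finset.card_powersetCard 2 A]
  apply Finset.card_nbij (fun e : CliqueEdge n => {e.val.1, e.val.2})
  · intro e he
    simp only [Finset.mem_coe, Finset.mem_filter, Finset.mem_univ, true_and] at he
    rw [Finset.mem_coe, Finset.mem_powersetCard]
    constructor
    · intro a ha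
      simp only [Finset.mem_insert, Finset.mem_singleton] at ha
      rcases ha with rfl | rfl
      · exact he.1
      · exact he.2
    · exact Finset.card_pair (ne_of_lt e.2)
  · intro e _ f _ h
    have hab := e.2
    have hcd := f.2
    have h : ({(e.val).1, (e.val).2} : Finset (Fin n)) = {(f.val).1, (f.val).2} := h
    have h1 : e.val.1 ∈ ({f.val.1, f.val.2} : Finset (Fin n)) := by rw [← h]; simp
    have h2 : e.val.2 ∈ ({f.val.1, f.val.2} : Finset (Fin n)) := by rw [← h]; simp
    have h3 : f.val.1 ∈ ({e.val.1, e.val.2} : Finset (Fin n)) := by rw [h]; simp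
    simp only [Finset.mem_insert, Finset.mem_singleton] at h1 h2 h3
    have key : e.val.1 = f.val.1 ∧ e.val.2 = f.val.2 := by
      rcases h1 with h1 | h1
      · rcases h2 with h2 | h2
        · exact absurd (h1 ▸ h2 ▸ hab) (lt_irrefl _)
        · exact ⟨h1, h2⟩
      · rcases h3 with h3 | h3
        · exact absurd (h3 ▸ h1 ▸ hcd) (lt_irrefl _)
        · exact absurd (lt_trans (h3 ▸ hab) (h1 ▸ hcd)) (lt_irrefl _)
    exact Subtype.ext (Prod.ext key.1 key.2)
  · intro s hs
    simp only [Finset.mem_coe, Finset.mem_powersetCard] at hs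
    obtain ⟨hsub, hcard⟩ := hs
    obtain ⟨x, y, hxy, rfl⟩ := Finset.card_eq_two.mp hcard
    have hx : x ∈ A := hsub (by simp)
    have hy : y ∈ A := hsub (by simp)
    rcases hxy.lt_or_gt with hlt | hlt
    · exact ⟨⟨(x, y), hlt⟩, Finset.mem_coe.mpr (Finset.mem_filter.mpr ⟨Finset.mem_univ _, hx, hy⟩), rfl⟩
    · exact ⟨⟨(y, x), hlt⟩, Finset.mem_coe.mpr (Finset.mem_filter.mpr ⟨Finset.mem_univ _, hy, hx⟩), by simp [Finset.pair_comm]⟩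

/-- The number of `k`-subsets `T` with `|S ∩ T| = i` is `C(k,i) C(n-k,k-i)`. -/
lemma card_fiber (n k : ℕ) (S : Finset (Fin n)) (hS : S.card = k) (i : ℕ) :
    ((Finset.univ.filter (fun T : Finset (Fin n) => T.card = k)).filter
        (fun T => (S ∩ T).card = i)).card
      = k.choose i * ((n - k).choose (k - i)) := by
  have hrhs : (Finset.powersetCard i S ×ˢ Finset.powersetCard (k - i) Sᶜ).card
      = k.choose i * ((n - k).choose (k - i)) := by
    rw [Finset.card_product, Finset.card_powersetCard, Finset.card_powersetCard, hS,
      Finset.card_compl, Fintype.card_fin, hS]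
  rw [← hrhs]
  apply Finset.card_nbij' (fun T => (S ∩ T, T \ S)) (fun P => P.1 ∪ P.2)
  · intro T hT
    simp only [Finset.mem_coe, Finset.mem_filter, Finset.mem_univ, true_and] at hT
    obtain ⟨hTk, hTi⟩ := hT
    have hcards : (T \ S).card + (T ∩ S).card = T.card := Finset.card_sdiff_add_card_inter T S
    rw [Finset.inter_comm T S, hTi, hTk] at hcards
    have hile : i ≤ k := by
      rw [← hTi, ← hTk]; exact Finset.card_le_card (Finset.inter_subset_right)
    have hsub : T \ S ⊆ Sᶜ := by
      intro a ha
      simp only [Finset.mem_sdiff] at ha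
      simpa using ha.2
    exact Finset.mem_product.mpr
      ⟨Finset.mem_powersetCard.mpr ⟨Finset.inter_subset_left, hTi⟩,
        Finset.mem_powersetCard.mpr ⟨hsub, show (T \ S).card = k - i by omega⟩⟩
  · intro P hP
    rw [Finset.mem_coe, Finset.mem_product] at hP
    obtain ⟨hA, hB⟩ := hP
    rw [Finset.mem_powersetCard] at hA hB
    have hdisj : Disjoint P.1 P.2 := by
      rw [Finset.disjoint_left]
      intro a haA haB
      exact (Finset.mem_compl.mp (hB.1 haB)) (hA.1 haA)
    have hile : i ≤ k := hS ▸ (hA.2 ▸ Finset.card_le_card hA.1)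
    have hSi : S ∩ (P.1 ∪ P.2) = P.1 := by
      ext a
      simp only [Finset.mem_inter, Finset.mem_union]
      constructor
      · rintro ⟨haS, h | h⟩
        · exact h
        · exact absurd haS (Finset.mem_compl.mp (hB.1 h))
      · intro h
        exact ⟨hA.1 h, Or.inl h⟩
    simp only [Finset.mem_coe, Finset.mem_filter, Finset.mem_univ, true_and]
    constructor
    · rw [Finset.card_union_of_disjoint hdisj, hA.2, hB.2]; omega
    · rw [hSi, hA.2]
  · intro T hT
    show S ∩ T ∪ T \ S = T
    rw [Finset.inter_comm, Finset.union_comm, Finset.sdiff_union_inter]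
  · intro P hP
    rw [Finset.mem_coe, Finset.mem_product] at hP
    obtain ⟨hA, hB⟩ := hP
    rw [Finset.mem_powersetCard] at hA hB
    have hSi : S ∩ (P.1 ∪ P.2) = P.1 := by
      ext a
      simp only [Finset.mem_inter, Finset.mem_union]
      constructor
      · rintro ⟨haS, h | h⟩
        · exact h
        · exact absurd haS (Finset.mem_compl.mp (hB.1 h))
      · intro h
        exact ⟨hA.1 h, Or.inl h⟩
    have hdiff : (P.1 ∪ P.2) \ S = P.2 := by
      ext a
      simp only [Finset.mem_sdiff, Finset.mem_union]
      constructor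
      · rintro ⟨h | h, hns⟩
        · exact absurd (hA.1 h) hns
        · exact h
      · intro h
        exact ⟨Or.inr h, Finset.mem_compl.mp (hB.1 h)⟩
    show (S ∩ (P.1 ∪ P.2), (P.1 ∪ P.2) \ S) = P
    rw [hSi, hdiff]

/-- The function integrated on each edge when expanding the square of the likelihood ratio. -/
noncomputable def edgeFun (p q : ℝ → ℝ) {n : ℕ} (S T : Finset (Fin n)) (e : CliqueEdge n)
    (t : ℝ) : ℝ :=
  (if e.val.1 ∈ S ∧ e.val.2 ∈ S then q t / p t else 1) *
    (if e.val.1 ∈ T ∧ e.val.2 ∈ T then q t / p t else 1) * p t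

set_option maxHeartbeats 2000000 in
/-- The second moment of the likelihood ratio under the null:
`E₀[L(X)²] = (1/C(n,k)) Σ_{i=0}^{k} C(k,i) C(n-k,k-i) ρ^{C(i,2)}` with
`ρ = E₀[(q(X)/p(X))²] = ∫ q²/p dμ`. -/
theorem second_moment_likelihood (n k : ℕ) (hk : 2 ≤ k) (hkn : k ≤ n)
    (μ : Measure ℝ) [SigmaFinite μ] (p q : ℝ → ℝ)
    (hp : Measurable p) (hq : Measurable q)
    (hp0 : ∀ x, 0 ≤ p x) (hq0 : ∀ x, 0 ≤ q x)
    (hprobp : ∫ t, p t ∂μ = 1) (hprobq : ∫ t, q t ∂μ = 1)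
    (habs : ∀ t, p t = 0 → q t = 0)
    (hrho : Integrable (fun t => q t ^ 2 / p t) μ) :
    ∫ x, (likelihoodRatio n k p q x) ^ 2 * ∏ e : CliqueEdge n, p (x e)
        ∂(Measure.pi fun _ : CliqueEdge n => μ) =
      (n.choose k : ℝ)⁻¹ *
        ∑ i ∈ Finset.range (k + 1),
          (k.choose i : ℝ) * ((n - k).choose (k - i) : ℝ) *
            (∫ t, q t ^ 2 / p t ∂μ) ^ i.choose 2 := by
  unfold likelihoodRatio
  set ρ : ℝ := ∫ t, q t ^ 2 / p t ∂μ with hρ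
  set 𝒮 : Finset (Finset (Fin n)) :=
    Finset.univ.filter (fun S : Finset (Fin n) => S.card = k) with h𝒮
  -- basic integrability facts
  have hintp : Integrable p μ := by
    by_contra h
    rw [integral_undef h] at hprobp
    exact one_ne_zero hprobp.symm
  have hintq : Integrable q μ := by
    by_contra h
    rw [integral_undef h] at hprobq
    exact one_ne_zero hprobq.symm
  -- pointwise simplifications
  have hsq : ∀ t, (q t / p t) * (q t / p t) * p t = q t ^ 2 / p t := by
    intro t
    rcases eq_or_ne (p t) 0 with h | h
    · simp [h]
    · field_simp
  have hlin : ∀ t, (q t / p t) * p t = q t := by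
    intro t
    rcases eq_or_ne (p t) 0 with h | h
    · simp [h, habs t h]
    · field_simp
  have hGeq : ∀ (S T : Finset (Fin n)) (e : CliqueEdge n), edgeFun p q S T e = fun t =>
      if (e.val.1 ∈ S ∧ e.val.2 ∈ S) ∧ (e.val.1 ∈ T ∧ e.val.2 ∈ T) then q t ^ 2 / p t
      else if (e.val.1 ∈ S ∧ e.val.2 ∈ S) ∨ (e.val.1 ∈ T ∧ e.val.2 ∈ T) then q t else p t := by
    intro S T e
    funext t
    unfold edgeFun
    by_cases h1 : e.val.1 ∈ S ∧ e.val.2 ∈ S <;>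
      by_cases h2 : e.val.1 ∈ T ∧ e.val.2 ∈ T <;>
      simp [h1, h2, hsq t, hlin t]
  have hGint : ∀ (S T : Finset (Fin n)) (e : CliqueEdge n),
      Integrable (edgeFun p q S T e) μ := by
    intro S T e
    rw [hGeq S T e]
    by_cases h1 : (e.val.1 ∈ S ∧ e.val.2 ∈ S) ∧ (e.val.1 ∈ T ∧ e.val.2 ∈ T)
    · simpa [h1] using hrho
    · by_cases h2 : (e.val.1 ∈ S ∧ e.val.2 ∈ S) ∨ (e.val.1 ∈ T ∧ e.val.2 ∈ T)
      · simpa [h1, h2] using hintq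
      · simpa [h1, h2] using hintp
  have hGval : ∀ (S T : Finset (Fin n)) (e : CliqueEdge n), ∫ t, edgeFun p q S T e t ∂μ =
      if (e.val.1 ∈ S ∧ e.val.2 ∈ S) ∧ (e.val.1 ∈ T ∧ e.val.2 ∈ T) then ρ else 1 := by
    intro S T e
    rw [hGeq S T e]
    by_cases h1 : (e.val.1 ∈ S ∧ e.val.2 ∈ S) ∧ (e.val.1 ∈ T ∧ e.val.2 ∈ T)
    · rw [if_pos h1]
      simp only [h1, if_true]
      exact hρ.symm
    · rw [if_neg h1]
      by_cases h2 : (e.val.1 ∈ S ∧ e.val.2 ∈ S) ∨ (e.val.1 ∈ T ∧ e.val.2 ∈ T)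
      · simpa [h1, h2] using hprobq
      · simpa [h1, h2] using hprobp
  -- the integral of the product over edges
  have hST : ∀ S T : Finset (Fin n),
      (∫ x : CliqueEdge n → ℝ, ∏ e : CliqueEdge n, edgeFun p q S T e (x e)
        ∂(Measure.pi fun _ => μ)) = ρ ^ ((S ∩ T).card.choose 2) := by
    intro S T
    rw [fubini_aux μ (fun e => edgeFun p q S T e)]
    calc ∏ e : CliqueEdge n, ∫ t, edgeFun p q S T e t ∂μ
        = ∏ e : CliqueEdge n,
            (if (e.val.1 ∈ S ∧ e.val.2 ∈ S) ∧ (e.val.1 ∈ T ∧ e.val.2 ∈ T) then ρ else 1) :=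
          Finset.prod_congr rfl (fun e _ => hGval S T e)
      _ = ρ ^ (Finset.univ.filter (fun e : CliqueEdge n =>
            (e.val.1 ∈ S ∧ e.val.2 ∈ S) ∧ (e.val.1 ∈ T ∧ e.val.2 ∈ T))).card := by
          rw [Finset.prod_ite, Finset.prod_const, Finset.prod_const, one_pow, mul_one]
      _ = ρ ^ ((S ∩ T).card.choose 2) := by
          rw [← card_edge_filter n (S ∩ T)]
          congr 2
          ext e
          simp only [Finset.mem_filter, Finset.mem_univ, true_and, Finset.mem_inter]
          tauto
  -- expand the square
  have hexp : ∀ x : CliqueEdge n → ℝ,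
      ((n.choose k : ℝ)⁻¹ * ∑ S ∈ 𝒮, ∏ e : CliqueEdge n,
          (if e.val.1 ∈ S ∧ e.val.2 ∈ S then q (x e) / p (x e) else 1)) ^ 2 *
        ∏ e : CliqueEdge n, p (x e)
      = ((n.choose k : ℝ)⁻¹ * (n.choose k : ℝ)⁻¹) *
          ∑ S ∈ 𝒮, ∑ T ∈ 𝒮, ∏ e : CliqueEdge n, edgeFun p q S T e (x e) := by
    intro x
    rw [pow_two, mul_mul_mul_comm, Finset.sum_mul_sum, mul_assoc]
    simp only [Finset.sum_mul]
    congr 1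
    refine Finset.sum_congr rfl fun S _ => Finset.sum_congr rfl fun T _ => ?_
    rw [← Finset.prod_mul_distrib, ← Finset.prod_mul_distrib]
    rfl
  rw [show (fun x : CliqueEdge n → ℝ =>
      ((n.choose k : ℝ)⁻¹ * ∑ S ∈ 𝒮, ∏ e : CliqueEdge n,
          (if e.val.1 ∈ S ∧ e.val.2 ∈ S then q (x e) / p (x e) else 1)) ^ 2 *
        ∏ e : CliqueEdge n, p (x e))
    = fun x : CliqueEdge n → ℝ => ((n.choose k : ℝ)⁻¹ * (n.choose k : ℝ)⁻¹) *
          ∑ S ∈ 𝒮, ∑ T ∈ 𝒮, ∏ e : CliqueEdge n, edgeFun p q S T e (x e) from funext hexp]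
  rw [integral_const_mul]
  rw [integral_finset_sum _ (fun S _ =>
    integrable_finset_sum _ (fun T _ => integrable_prod_aux μ _ (hGint S T)))]
  have hswap : ∀ S ∈ 𝒮,
      (∫ x : CliqueEdge n → ℝ, ∑ T ∈ 𝒮, ∏ e : CliqueEdge n, edgeFun p q S T e (x e)
        ∂(Measure.pi fun _ : CliqueEdge n => μ))
      = ∑ T ∈ 𝒮, ρ ^ ((S ∩ T).card.choose 2) := by
    intro S _
    rw [integral_finset_sum _ (fun T _ => integrable_prod_aux μ _ (hGint S T))]
    exact Finset.sum_congr rfl fun T _ => hST S T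
  rw [Finset.sum_congr rfl hswap]
  -- group the inner sum by the size of the intersection
  have hcount : ∀ S ∈ 𝒮, ∑ T ∈ 𝒮, ρ ^ ((S ∩ T).card.choose 2)
      = ∑ i ∈ Finset.range (k + 1),
          (k.choose i : ℝ) * ((n - k).choose (k - i) : ℝ) * ρ ^ i.choose 2 := by
    intro S hS
    have hSk : S.card = k := by
      rw [h𝒮, Finset.mem_filter] at hS
      exact hS.2
    rw [← Finset.sum_fiberwise_of_maps_to (g := fun T => (S ∩ T).card)
      (t := Finset.range (k + 1)) (fun T _ => Finset.mem_range.mpr (by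
        show (S ∩ T).card < k + 1
        have h1 : (S ∩ T).card ≤ S.card := Finset.card_le_card Finset.inter_subset_left
        omega))]
    refine Finset.sum_congr rfl fun i _ => ?_
    have heq : ∀ T ∈ 𝒮.filter (fun T => (S ∩ T).card = i),
        ρ ^ ((S ∩ T).card.choose 2) = ρ ^ i.choose 2 := fun T hT => by
      rw [(Finset.mem_filter.mp hT).2]
    rw [Finset.sum_congr rfl heq, Finset.sum_const, h𝒮, card_fiber n k S hSk i,
      nsmul_eq_mul]
    push_cast
    ring
  rw [Finset.sum_congr rfl hcount, Finset.sum_const]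
  have hcardS : 𝒮.card = n.choose k := by
    have : 𝒮 = Finset.powersetCard k (Finset.univ : Finset (Fin n)) := by
      ext S
      simp [h𝒮, Finset.mem_powersetCard]
    rw [this, Finset.card_powersetCard, Finset.card_univ, Fintype.card_fin]
  rw [hcardS, nsmul_eq_mul]
  have hc : (n.choose k : ℝ) ≠ 0 := Nat.cast_ne_zero.mpr (Nat.choose_pos hkn).ne'
  field_simp
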